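/- arXiv:2604.01378 — 4 statements merged into one kernel-verified Lean document; each statement's English description precedes it below -/
import Mathlib

section
/- Suppose c is L_c-Lipschitz in the state uniformly over actions and f* is L_f-Lipschitz in the state uniformly over actions. If Q ∈ B(S×A) satisfies |Q(s₁,a) − Q(s₂,a)| ≤ L ‖s₁ − s₂‖ for all s₁, s₂ ∈ S and all a ∈ A, then T*_N Q satisfies |(T*_N Q)(s₁,a) − (T*_N Q)(s₂,a)| ≤ (L_c + γ L_f L) ‖s₁ − s₂‖ for all s₁, s₂ ∈ S and all a ∈ A. -/
open MeasureTheory Filter Topology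
open scoped BigOperators

noncomputable section

abbrev Euc (d : ℕ) : Type := EuclideanSpace ℝ (Fin d)

/-- If two bounded-below real families are uniformly K-close, their infima are K-close. -/
lemma iInf_abs_sub_le {A : Type*} [Nonempty A] (u v : A → ℝ)
    (hu : BddBelow (Set.range u)) (hv : BddBelow (Set.range v))
    {K : ℝ} (h : ∀ a, |u a - v a| ≤ K) :
    |(⨅ a, u a) - (⨅ a, v a)| ≤ K := by
  rw [abs_sub_le_iff]
  constructor
  · rw [sub_le_iff_le_add, add_comm, ← sub_le_iff_le_add]
    apply le_ciInf; intro a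
    have h1 : (⨅ a, u a) ≤ u a := ciInf_le hu a
    have h2 := h a; rw [abs_sub_le_iff] at h2
    linarith [h2.1]
  · rw [sub_le_iff_le_add, add_comm, ← sub_le_iff_le_add]
    apply le_ciInf; intro a
    have h1 : (⨅ a, v a) ≤ v a := ciInf_le hv a
    have h2 := h a; rw [abs_sub_le_iff] at h2
    linarith [h2.2]

/-- if `Q` is `L`-Lipschitz in the state uniformly over actions, then
`T*_N Q` is `(L_c + γ L_f L)`-Lipschitz in the state uniformly over actions. -/
theorem stmt_2
    {d : ℕ} (hd : 1 ≤ d)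
    {S : Set (Euc d)} (hSne : S.Nonempty) (hScl : IsClosed S) (hSconv : Convex ℝ S)
    {A : Type*} [Nonempty A]
    (c : ↥S × A → ℝ) (γ : ℝ) (hγ0 : 0 ≤ γ) (hγ1 : γ < 1)
    (N : ℕ) (hN : 1 ≤ N)
    (fstar : ↥S × A → Euc d) (ε : Fin N → Euc d)
    (hmem : ∀ (s : ↥S) (a : A) (i : Fin N), fstar (s, a) + ε i ∈ S)
    (TstarN : (↥S × A → ℝ) → (↥S × A → ℝ))
    (hTstarN : ∀ (Q : ↥S × A → ℝ) (s : ↥S) (a : A),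
      TstarN Q (s, a) = c (s, a) + (γ / (N : ℝ)) * ∑ i : Fin N,
        ⨅ a' : A, Q (⟨fstar (s, a) + ε i, hmem s a i⟩, a'))
    (Lc Lf L : ℝ) (hLc : 0 ≤ Lc) (hLf : 0 ≤ Lf) (hL : 0 ≤ L)
    (hclip : ∀ (s₁ s₂ : ↥S) (a : A),
      |c (s₁, a) - c (s₂, a)| ≤ Lc * ‖(s₁ : Euc d) - (s₂ : Euc d)‖)
    (hflip : ∀ (s₁ s₂ : ↥S) (a : A),
      ‖fstar (s₁, a) - fstar (s₂, a)‖ ≤ Lf * ‖(s₁ : Euc d) - (s₂ : Euc d)‖)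
    (Q : ↥S × A → ℝ) (hQb : ∃ C, ∀ p, |Q p| ≤ C)
    (hQlip : ∀ (s₁ s₂ : ↥S) (a : A),
      |Q (s₁, a) - Q (s₂, a)| ≤ L * ‖(s₁ : Euc d) - (s₂ : Euc d)‖) :
    ∀ (s₁ s₂ : ↥S) (a : A),
      |TstarN Q (s₁, a) - TstarN Q (s₂, a)| ≤
        (Lc + γ * Lf * L) * ‖(s₁ : Euc d) - (s₂ : Euc d)‖ := by
  obtain ⟨C, hC⟩ := hQb
  have hbdd : ∀ (x : ↥S), BddBelow (Set.range fun a' : A => Q (x, a')) := by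
    intro x
    exact ⟨-C, by rintro y ⟨a', rfl⟩; have := hC (x, a'); rw [abs_le] at this; linarith [this.1]⟩
  intro s₁ s₂ a
  rw [hTstarN, hTstarN]
  have key : ∀ i : Fin N,
      |(⨅ a' : A, Q (⟨fstar (s₁, a) + ε i, hmem s₁ a i⟩, a')) -
       (⨅ a' : A, Q (⟨fstar (s₂, a) + ε i, hmem s₂ a i⟩, a'))| ≤
      L * Lf * ‖(s₁ : Euc d) - (s₂ : Euc d)‖ := by
    intro i
    apply iInf_abs_sub_le _ _ (hbdd _) (hbdd _)
    intro a'
    calc |Q (⟨fstar (s₁, a) + ε i, hmem s₁ a i⟩, a') -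
          Q (⟨fstar (s₂, a) + ε i, hmem s₂ a i⟩, a')|
        ≤ L * ‖(fstar (s₁, a) + ε i) - (fstar (s₂, a) + ε i)‖ := hQlip _ _ _
      _ = L * ‖fstar (s₁, a) - fstar (s₂, a)‖ := by congr 1; congr 1; abel
      _ ≤ L * (Lf * ‖(s₁ : Euc d) - (s₂ : Euc d)‖) := by
          exact mul_le_mul_of_nonneg_left (hflip _ _ _) hL
      _ = L * Lf * ‖(s₁ : Euc d) - (s₂ : Euc d)‖ := by ring
  have hNpos : (0 : ℝ) < N := by exact_mod_cast hN
  have hsum : |(∑ i : Fin N, ⨅ a' : A, Q (⟨fstar (s₁, a) + ε i, hmem s₁ a i⟩, a')) -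
      (∑ i : Fin N, ⨅ a' : A, Q (⟨fstar (s₂, a) + ε i, hmem s₂ a i⟩, a'))| ≤
      N * (L * Lf * ‖(s₁ : Euc d) - (s₂ : Euc d)‖) := by
    rw [← Finset.sum_sub_distrib]
    calc _ ≤ ∑ i : Fin N, |(⨅ a' : A, Q (⟨fstar (s₁, a) + ε i, hmem s₁ a i⟩, a')) -
        (⨅ a' : A, Q (⟨fstar (s₂, a) + ε i, hmem s₂ a i⟩, a'))| :=
        Finset.abs_sum_le_sum_abs _ _
      _ ≤ ∑ _i : Fin N, L * Lf * ‖(s₁ : Euc d) - (s₂ : Euc d)‖ :=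
        Finset.sum_le_sum fun i _ => key i
      _ = N * (L * Lf * ‖(s₁ : Euc d) - (s₂ : Euc d)‖) := by
        simp [Finset.sum_const, mul_comm]
  have h1 := hclip s₁ s₂ a
  have h2 : |γ / N * (∑ i : Fin N, ⨅ a' : A, Q (⟨fstar (s₁, a) + ε i, hmem s₁ a i⟩, a')) -
      γ / N * (∑ i : Fin N, ⨅ a' : A, Q (⟨fstar (s₂, a) + ε i, hmem s₂ a i⟩, a'))| ≤
      γ * Lf * L * ‖(s₁ : Euc d) - (s₂ : Euc d)‖ := by
    rw [← mul_sub, abs_mul, abs_of_nonneg (div_nonneg hγ0 hNpos.le)]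
    calc γ / N * _ ≤ γ / N * (N * (L * Lf * ‖(s₁ : Euc d) - (s₂ : Euc d)‖)) :=
        mul_le_mul_of_nonneg_left hsum (div_nonneg hγ0 hNpos.le)
      _ = γ * Lf * L * ‖(s₁ : Euc d) - (s₂ : Euc d)‖ := by field_simp
  set X₁ := ∑ i : Fin N, ⨅ a' : A, Q (⟨fstar (s₁, a) + ε i, hmem s₁ a i⟩, a') with hX₁
  set X₂ := ∑ i : Fin N, ⨅ a' : A, Q (⟨fstar (s₂, a) + ε i, hmem s₂ a i⟩, a') with hX₂
  have heq : c (s₁, a) + γ / N * X₁ - (c (s₂, a) + γ / N * X₂) =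
      (c (s₁, a) - c (s₂, a)) + (γ / N * X₁ - γ / N * X₂) := by ring
  rw [heq]
  calc |(c (s₁, a) - c (s₂, a)) + (γ / N * X₁ - γ / N * X₂)|
      ≤ |c (s₁, a) - c (s₂, a)| + |γ / N * X₁ - γ / N * X₂| := abs_add_le _ _
    _ ≤ Lc * ‖(s₁ : Euc d) - (s₂ : Euc d)‖ + γ * Lf * L * ‖(s₁ : Euc d) - (s₂ : Euc d)‖ :=
        add_le_add h1 h2
    _ = (Lc + γ * Lf * L) * ‖(s₁ : Euc d) - (s₂ : Euc d)‖ := by ring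
end
end

section
/- Suppose c is L_c-Lipschitz in the state uniformly over actions, f* is L_f-Lipschitz in the state uniformly over actions, and γ L_f < 1. If Q*_N ∈ B(S×A) is a fixed point of T*_N (i.e., T*_N Q*_N = Q*_N), then |Q*_N(s₁,a) − Q*_N(s₂,a)| ≤ (L_c/(1 − γ L_f)) ‖s₁ − s₂‖ for all s₁, s₂ ∈ S and all a ∈ A; moreover, the value function V*_N(s) := inf_{a ∈ A} Q*_N(s,a) satisfies |V*_N(s₁) − V*_N(s₂)| ≤ (L_c/(1 − γ L_f)) ‖s₁ − s₂‖ for all s₁, s₂ ∈ S. -/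
open MeasureTheory Filter Topology
open scoped BigOperators

noncomputable section

private lemma inf_diff_le {A : Type*} [Nonempty A] (f g : A → ℝ)
    (hf : BddBelow (Set.range f)) (hg : BddBelow (Set.range g)) (B : ℝ)
    (h : ∀ a, |f a - g a| ≤ B) : |(⨅ a, f a) - ⨅ a, g a| ≤ B := by
  have h1 : (⨅ a, f a) - B ≤ ⨅ a, g a := by
    apply le_ciInf
    intro a
    have := ciInf_le hf a
    have := (abs_le.1 (h a)).2
    linarith
  have h2 : (⨅ a, g a) - B ≤ ⨅ a, f a := by
    apply le_ciInf
    intro a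
    have := ciInf_le hg a
    have := (abs_le.1 (h a)).1
    linarith
  exact abs_le.2 ⟨by linarith, by linarith⟩

/-- if `γ L_f < 1`, then any bounded fixed point `Q*_N` of the
full-information Bellman optimality operator `T*_N` is `(L_c / (1 - γ L_f))`-Lipschitz
in the state uniformly over actions, and so is the value function
`V*_N(s) = inf_{a} Q*_N(s,a)`. -/
theorem stmt_3
    {d : ℕ} (hd : 1 ≤ d)
    {S : Set (Euc d)} (hSne : S.Nonempty) (hScl : IsClosed S) (hSconv : Convex ℝ S)
    {A : Type*} [Nonempty A]
    (c : ↥S × A → ℝ) (γ : ℝ) (hγ0 : 0 ≤ γ) (hγ1 : γ < 1)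
    (N : ℕ) (hN : 1 ≤ N)
    (fstar : ↥S × A → Euc d) (ε : Fin N → Euc d)
    (hmem : ∀ (s : ↥S) (a : A) (i : Fin N), fstar (s, a) + ε i ∈ S)
    (TstarN : (↥S × A → ℝ) → (↥S × A → ℝ))
    (hTstarN : ∀ (Q : ↥S × A → ℝ) (s : ↥S) (a : A),
      TstarN Q (s, a) = c (s, a) + (γ / (N : ℝ)) * ∑ i : Fin N,
        ⨅ a' : A, Q (⟨fstar (s, a) + ε i, hmem s a i⟩, a'))
    (Lc Lf : ℝ) (hLc : 0 ≤ Lc) (hLf : 0 ≤ Lf)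
    (hclip : ∀ (s₁ s₂ : ↥S) (a : A),
      |c (s₁, a) - c (s₂, a)| ≤ Lc * ‖(s₁ : Euc d) - (s₂ : Euc d)‖)
    (hflip : ∀ (s₁ s₂ : ↥S) (a : A),
      ‖fstar (s₁, a) - fstar (s₂, a)‖ ≤ Lf * ‖(s₁ : Euc d) - (s₂ : Euc d)‖)
    (hγLf : γ * Lf < 1)
    (QstarN : ↥S × A → ℝ) (hQb : ∃ C, ∀ p, |QstarN p| ≤ C)
    (hfix : TstarN QstarN = QstarN) :
    (∀ (s₁ s₂ : ↥S) (a : A),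
      |QstarN (s₁, a) - QstarN (s₂, a)| ≤
        (Lc / (1 - γ * Lf)) * ‖(s₁ : Euc d) - (s₂ : Euc d)‖) ∧
    (∀ s₁ s₂ : ↥S,
      |(⨅ a : A, QstarN (s₁, a)) - ⨅ a : A, QstarN (s₂, a)| ≤
        (Lc / (1 - γ * Lf)) * ‖(s₁ : Euc d) - (s₂ : Euc d)‖) := by
  haveI : Nonempty ↥S := hSne.to_subtype
  obtain ⟨C, hC⟩ := hQb
  have h1γ : 0 < 1 - γ * Lf := by linarith
  set L : ℝ := Lc / (1 - γ * Lf) with hLdef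
  have hL0 : 0 ≤ L := div_nonneg hLc h1γ.le
  have hLeq : Lc + γ * Lf * L = L := by
    have : L * (1 - γ * Lf) = Lc := div_mul_cancel₀ Lc (ne_of_gt h1γ)
    nlinarith
  have hQbb : ∀ u : ↥S, BddBelow (Set.range fun a' : A => QstarN (u, a')) := by
    intro u
    refine ⟨-C, ?_⟩
    rintro x ⟨a', rfl⟩
    linarith [(abs_le.1 (hC (u, a'))).1]
  set F : (↥S × ↥S × A) → ℝ := fun p =>
    |QstarN (p.1, p.2.2) - QstarN (p.2.1, p.2.2)| - L * ‖(p.1 : Euc d) - (p.2.1 : Euc d)‖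
    with hFdef
  have hFbdd : BddAbove (Set.range F) := by
    refine ⟨2 * C, ?_⟩
    rintro x ⟨p, rfl⟩
    have h1 := abs_sub (QstarN (p.1, p.2.2)) (QstarN (p.2.1, p.2.2))
    have h2 := hC (p.1, p.2.2)
    have h3 := hC (p.2.1, p.2.2)
    have h4 : 0 ≤ L * ‖(p.1 : Euc d) - (p.2.1 : Euc d)‖ :=
      mul_nonneg hL0 (norm_nonneg _)
    simp only [hFdef]
    linarith
  set M : ℝ := ⨆ p, F p with hMdef
  have hFM : ∀ p, F p ≤ M := fun p => le_ciSup hFbdd p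
  -- key step: F p ≤ γ * M for all p
  have hkey : ∀ p, F p ≤ γ * M := by
    rintro ⟨s₁, s₂, a⟩
    set D : ℝ := ‖(s₁ : Euc d) - (s₂ : Euc d)‖ with hDdef
    have hD0 : 0 ≤ D := norm_nonneg _
    have hQ1 : QstarN (s₁, a) = c (s₁, a) + (γ / (N : ℝ)) * ∑ i : Fin N,
        ⨅ a' : A, QstarN (⟨fstar (s₁, a) + ε i, hmem s₁ a i⟩, a') := by
      rw [← hTstarN QstarN s₁ a, hfix]
    have hQ2 : QstarN (s₂, a) = c (s₂, a) + (γ / (N : ℝ)) * ∑ i : Fin N,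
        ⨅ a' : A, QstarN (⟨fstar (s₂, a) + ε i, hmem s₂ a i⟩, a') := by
      rw [← hTstarN QstarN s₂ a, hfix]
    -- bound each infimum difference
    have hinf : ∀ i : Fin N,
        |(⨅ a' : A, QstarN (⟨fstar (s₁, a) + ε i, hmem s₁ a i⟩, a')) -
          ⨅ a' : A, QstarN (⟨fstar (s₂, a) + ε i, hmem s₂ a i⟩, a')| ≤
          L * Lf * D + M := by
      intro i
      set u : ↥S := ⟨fstar (s₁, a) + ε i, hmem s₁ a i⟩
      set v : ↥S := ⟨fstar (s₂, a) + ε i, hmem s₂ a i⟩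
      have huv : ‖(u : Euc d) - (v : Euc d)‖ ≤ Lf * D := by
        have : (u : Euc d) - (v : Euc d) = fstar (s₁, a) - fstar (s₂, a) := by
          show (fstar (s₁, a) + ε i) - (fstar (s₂, a) + ε i) = _
          abel
        rw [this]
        exact hflip s₁ s₂ a
      refine inf_diff_le _ _ (hQbb u) (hQbb v) _ ?_
      intro a'
      have h1 := hFM ⟨u, v, a'⟩
      have h2 : L * ‖(u : Euc d) - (v : Euc d)‖ ≤ L * (Lf * D) :=
        mul_le_mul_of_nonneg_left huv hL0
      simp only [hFdef] at h1
      nlinarith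
    -- sum bound
    have hsum : |(∑ i : Fin N, ⨅ a' : A, QstarN (⟨fstar (s₁, a) + ε i, hmem s₁ a i⟩, a')) -
          ∑ i : Fin N, ⨅ a' : A, QstarN (⟨fstar (s₂, a) + ε i, hmem s₂ a i⟩, a')| ≤
          (N : ℝ) * (L * Lf * D + M) := by
      rw [← Finset.sum_sub_distrib]
      calc _ ≤ ∑ i : Fin N, |(⨅ a' : A, QstarN (⟨fstar (s₁, a) + ε i, hmem s₁ a i⟩, a')) -
            ⨅ a' : A, QstarN (⟨fstar (s₂, a) + ε i, hmem s₂ a i⟩, a')| :=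
          Finset.abs_sum_le_sum_abs _ _
        _ ≤ ∑ _i : Fin N, (L * Lf * D + M) := Finset.sum_le_sum fun i _ => hinf i
        _ = (N : ℝ) * (L * Lf * D + M) := by
          rw [Finset.sum_const, Finset.card_univ, Fintype.card_fin, nsmul_eq_mul]
    have hN0 : (0 : ℝ) < N := by exact_mod_cast hN
    have hγN : 0 ≤ γ / (N : ℝ) := div_nonneg hγ0 hN0.le
    have habs : |QstarN (s₁, a) - QstarN (s₂, a)| ≤
        Lc * D + (γ / (N : ℝ)) * ((N : ℝ) * (L * Lf * D + M)) := by
      rw [hQ1, hQ2]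
      set Ssum1 : ℝ := ∑ i : Fin N,
        ⨅ a' : A, QstarN (⟨fstar (s₁, a) + ε i, hmem s₁ a i⟩, a') with hSsum1
      set Ssum2 : ℝ := ∑ i : Fin N,
        ⨅ a' : A, QstarN (⟨fstar (s₂, a) + ε i, hmem s₂ a i⟩, a') with hSsum2
      have e : (c (s₁, a) + (γ / (N : ℝ)) * Ssum1) - (c (s₂, a) + (γ / (N : ℝ)) * Ssum2) =
          (c (s₁, a) - c (s₂, a)) + (γ / (N : ℝ)) * (Ssum1 - Ssum2) := by ring
      rw [e]
      refine le_trans (abs_add_le _ _) ?_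
      rw [abs_mul, abs_of_nonneg hγN]
      exact add_le_add (hclip s₁ s₂ a) (mul_le_mul_of_nonneg_left hsum hγN)
    have hNcancel : (γ / (N : ℝ)) * ((N : ℝ) * (L * Lf * D + M)) = γ * (L * Lf * D + M) := by
      field_simp
    rw [hNcancel] at habs
    simp only [hFdef]
    have : Lc * D + γ * Lf * L * D = L * D := by nlinarith
    nlinarith
  -- M ≤ 0
  have hM0 : 0 ≤ M := by
    obtain ⟨s0⟩ := (inferInstance : Nonempty ↥S)
    obtain ⟨a0⟩ := (inferInstance : Nonempty A)
    have := hFM ⟨s0, s0, a0⟩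
    simp only [hFdef, sub_self, abs_zero, norm_zero, mul_zero, zero_sub, sub_self] at this
    simpa using this
  have hMγM : M ≤ γ * M := ciSup_le hkey
  have hMle : M ≤ 0 := by nlinarith
  have main : ∀ (s₁ s₂ : ↥S) (a : A),
      |QstarN (s₁, a) - QstarN (s₂, a)| ≤ L * ‖(s₁ : Euc d) - (s₂ : Euc d)‖ := by
    intro s₁ s₂ a
    have := hFM ⟨s₁, s₂, a⟩
    simp only [hFdef] at this
    linarith
  refine ⟨main, ?_⟩
  intro s₁ s₂
  exact inf_diff_le _ _ (hQbb s₁) (hQbb s₂) _ fun a => main s₁ s₂ a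
end
end

section
/- Suppose c is L_c-Lipschitz in the state uniformly over actions and the transition kernel P satisfies the Kantorovich-type bound: for every bounded 1-Lipschitz function φ : S → ℝ, all s₁, s₂ ∈ S and all a ∈ A, |∫_S φ(s') P(ds'|s₁,a) − ∫_S φ(s') P(ds'|s₂,a)| ≤ L_p ‖s₁ − s₂‖. If Q ∈ B(S×A) is such that V_Q(s) := inf_{a ∈ A} Q(s,a) is L-Lipschitz on S (and Borel measurable), then (T* Q)(s,a) := c(s,a) + γ ∫_S V_Q(s') P(ds'|s,a) satisfies |(T* Q)(s₁,a) − (T* Q)(s₂,a)| ≤ (L_c + γ L_p L) ‖s₁ − s₂‖ for all s₁, s₂ ∈ S and all a ∈ A. -/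
open MeasureTheory Filter Topology
open scoped BigOperators

noncomputable section

/-- if the transition kernel satisfies the Kantorovich-type bound with
constant `L_p`, `c` is `L_c`-Lipschitz in the state uniformly over actions, and
`V_Q(s) = inf_a Q(s,a)` is bounded, Borel measurable and `L`-Lipschitz, then
`(T* Q)(s,a) = c(s,a) + γ ∫ V_Q dP(·|s,a)` is `(L_c + γ L_p L)`-Lipschitz in the
state uniformly over actions. -/
theorem stmt_4
    {d : ℕ} (hd : 1 ≤ d)
    {S : Set (Euc d)} (hSne : S.Nonempty) (hScl : IsClosed S) (hSconv : Convex ℝ S)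
    {A : Type*} [Nonempty A]
    (c : ↥S × A → ℝ) (γ : ℝ) (hγ0 : 0 ≤ γ) (hγ1 : γ < 1)
    (P : ↥S × A → Measure ↥S) [∀ p, IsProbabilityMeasure (P p)]
    (Lc Lp L : ℝ) (hLc : 0 ≤ Lc) (hLp : 0 ≤ Lp) (hL : 0 ≤ L)
    (hclip : ∀ (s₁ s₂ : ↥S) (a : A),
      |c (s₁, a) - c (s₂, a)| ≤ Lc * ‖(s₁ : Euc d) - (s₂ : Euc d)‖)
    (hker : ∀ φ : ↥S → ℝ, (∃ C, ∀ s, |φ s| ≤ C) →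
      (∀ s₁ s₂ : ↥S, |φ s₁ - φ s₂| ≤ ‖(s₁ : Euc d) - (s₂ : Euc d)‖) →
      ∀ (s₁ s₂ : ↥S) (a : A),
        |(∫ s', φ s' ∂(P (s₁, a))) - ∫ s', φ s' ∂(P (s₂, a))| ≤
          Lp * ‖(s₁ : Euc d) - (s₂ : Euc d)‖)
    (Q : ↥S × A → ℝ) (hQb : ∃ C, ∀ p, |Q p| ≤ C)
    (hVmeas : Measurable (fun s : ↥S => ⨅ a : A, Q (s, a)))
    (hVlip : ∀ s₁ s₂ : ↥S,
      |(⨅ a : A, Q (s₁, a)) - ⨅ a : A, Q (s₂, a)| ≤ L * ‖(s₁ : Euc d) - (s₂ : Euc d)‖) :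
    ∀ (s₁ s₂ : ↥S) (a : A),
      |(c (s₁, a) + γ * ∫ s', (⨅ a' : A, Q (s', a')) ∂(P (s₁, a))) -
        (c (s₂, a) + γ * ∫ s', (⨅ a' : A, Q (s', a')) ∂(P (s₂, a)))| ≤
        (Lc + γ * Lp * L) * ‖(s₁ : Euc d) - (s₂ : Euc d)‖ := by
  classical
  obtain ⟨C, hC⟩ := hQb
  set V : ↥S → ℝ := fun s => ⨅ a : A, Q (s, a) with hV
  have hVbd : ∀ s, |V s| ≤ C := by
    intro s
    have hbdd : BddBelow (Set.range fun a : A => Q (s, a)) :=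
      ⟨-C, by rintro _ ⟨a, rfl⟩; linarith [abs_le.1 (hC (s, a)) |>.1]⟩
    rw [abs_le]
    constructor
    · have := le_ciInf (f := fun a : A => Q (s, a)) (fun a => (abs_le.1 (hC (s, a))).1)
      simpa [V] using this
    · obtain ⟨a⟩ := (inferInstance : Nonempty A)
      have h1 : V s ≤ Q (s, a) := ciInf_le hbdd a
      have := (abs_le.1 (hC (s, a))).2
      linarith
  have key : ∀ (s₁ s₂ : ↥S) (a : A),
      |(∫ s', V s' ∂(P (s₁, a))) - ∫ s', V s' ∂(P (s₂, a))| ≤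
        Lp * L * ‖(s₁ : Euc d) - (s₂ : Euc d)‖ := by
    intro s₁ s₂ a
    rcases eq_or_lt_of_le hL with hL0 | hLpos
    · -- L = 0: V constant
      obtain ⟨s₀⟩ := hSne.to_subtype
      have hconst : ∀ s, V s = V s₀ := by
        intro s
        have h := hVlip s s₀
        rw [← hL0, zero_mul] at h
        have h0 : V s - V s₀ = 0 := abs_nonpos_iff.mp h
        linarith
      have h1 : (∫ s', V s' ∂(P (s₁, a))) = V s₀ := by
        simp_rw [hconst]; simp
      have h2 : (∫ s', V s' ∂(P (s₂, a))) = V s₀ := by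
        simp_rw [hconst]; simp
      rw [h1, h2, ← hL0]
      simp
    · -- L > 0: apply hker to V/L
      have hb : ∃ C', ∀ s, |(V s) / L| ≤ C' := by
        refine ⟨C / L, fun s => ?_⟩
        rw [abs_div, abs_of_pos hLpos]
        exact div_le_div_of_nonneg_right (hVbd s) hLpos.le
      have hlip : ∀ s₁ s₂ : ↥S, |(V s₁) / L - (V s₂) / L| ≤
          ‖(s₁ : Euc d) - (s₂ : Euc d)‖ := by
        intro t₁ t₂
        rw [div_sub_div_same, abs_div, abs_of_pos hLpos, div_le_iff₀ hLpos]
        calc |V t₁ - V t₂| ≤ L * ‖(t₁ : Euc d) - (t₂ : Euc d)‖ := hVlip t₁ t₂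
          _ = ‖(t₁ : Euc d) - (t₂ : Euc d)‖ * L := mul_comm _ _
      have := hker (fun s => V s / L) hb hlip s₁ s₂ a
      have hint : ∀ μ : Measure ↥S, (∫ s', V s' / L ∂μ) = (∫ s', V s' ∂μ) / L :=
        fun μ => integral_div L _
      rw [hint, hint, div_sub_div_same, abs_div, abs_of_pos hLpos,
        div_le_iff₀ hLpos] at this
      calc |(∫ s', V s' ∂(P (s₁, a))) - ∫ s', V s' ∂(P (s₂, a))|
          ≤ Lp * ‖(s₁ : Euc d) - (s₂ : Euc d)‖ * L := this
        _ = Lp * L * ‖(s₁ : Euc d) - (s₂ : Euc d)‖ := by ring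
  intro s₁ s₂ a
  have h1 := hclip s₁ s₂ a
  have h2 := key s₁ s₂ a
  have habs : |γ * (∫ s', V s' ∂(P (s₁, a))) - γ * ∫ s', V s' ∂(P (s₂, a))|
      ≤ γ * (Lp * L * ‖(s₁ : Euc d) - (s₂ : Euc d)‖) := by
    rw [← mul_sub, abs_mul, abs_of_nonneg hγ0]
    exact mul_le_mul_of_nonneg_left h2 hγ0
  calc |(c (s₁, a) + γ * ∫ s', V s' ∂(P (s₁, a))) -
        (c (s₂, a) + γ * ∫ s', V s' ∂(P (s₂, a)))|
      = |(c (s₁, a) - c (s₂, a)) +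
        (γ * (∫ s', V s' ∂(P (s₁, a))) - γ * ∫ s', V s' ∂(P (s₂, a)))| := by ring_nf
    _ ≤ |c (s₁, a) - c (s₂, a)| +
        |γ * (∫ s', V s' ∂(P (s₁, a))) - γ * ∫ s', V s' ∂(P (s₂, a))| := abs_add_le _ _
    _ ≤ Lc * ‖(s₁ : Euc d) - (s₂ : Euc d)‖ +
        γ * (Lp * L * ‖(s₁ : Euc d) - (s₂ : Euc d)‖) := add_le_add h1 habs
    _ = (Lc + γ * Lp * L) * ‖(s₁ : Euc d) - (s₂ : Euc d)‖ := by ring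
end
end

section
/- Suppose c is bounded and L_c-Lipschitz in the state uniformly over actions, the transition kernel P satisfies the Kantorovich-type bound: for every bounded 1-Lipschitz function φ : S → ℝ, all s₁, s₂ ∈ S and all a ∈ A, |∫_S φ(s') P(ds'|s₁,a) − ∫_S φ(s') P(ds'|s₂,a)| ≤ L_p ‖s₁ − s₂‖, and γ L_p < 1. Then the value-iteration sequence defined by Q^(1) ≡ 0 and Q^(k+1) := T* Q^(k), where (T* Q)(s,a) := c(s,a) + γ ∫_S (inf_{a' ∈ A} Q(s',a')) P(ds'|s,a), converges uniformly on S × A to a bounded function Q* satisfying T* Q* = Q*, and Q* satisfies |Q*(s₁,a) − Q*(s₂,a)| ≤ (L_c/(1 − γ L_p)) ‖s₁ − s₂‖ for all s₁, s₂ ∈ S and all a ∈ A; moreover V*(s) := inf_{a ∈ A} Q*(s,a) satisfies |V*(s₁) − V*(s₂)| ≤ (L_c/(1 − γ L_p)) ‖s₁ − s₂‖ for all s₁, s₂ ∈ S. -/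
open MeasureTheory Filter Topology
open scoped BigOperators

noncomputable section

lemma bdd_of_abs {A : Type*} (f : A → ℝ) (C : ℝ) (h : ∀ a, |f a| ≤ C) :
    BddBelow (Set.range f) :=
  ⟨-C, by rintro x ⟨a, rfl⟩; exact neg_le_of_abs_le (h a)⟩

lemma abs_ciInf_le {A : Type*} [Nonempty A] (f : A → ℝ) (C : ℝ) (h : ∀ a, |f a| ≤ C) :
    |⨅ a, f a| ≤ C := by
  rw [abs_le]
  refine ⟨le_ciInf fun a => neg_le_of_abs_le (h a), ?_⟩
  exact le_trans (ciInf_le (bdd_of_abs f C h) (Classical.arbitrary A)) (abs_le.1 (h _)).2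

lemma ciInf_sub_le {A : Type*} [Nonempty A] (f g : A → ℝ) (δ : ℝ)
    (hf : BddBelow (Set.range f)) (h : ∀ a, f a - g a ≤ δ) :
    (⨅ a, f a) - ⨅ a, g a ≤ δ := by
  have : (⨅ a, f a) - δ ≤ ⨅ a, g a :=
    le_ciInf fun a => by have h1 := ciInf_le hf a; have h2 := h a; linarith
  linarith

lemma abs_ciInf_sub {A : Type*} [Nonempty A] (f g : A → ℝ) (δ : ℝ)
    (hf : BddBelow (Set.range f)) (hg : BddBelow (Set.range g))
    (h : ∀ a, |f a - g a| ≤ δ) : |(⨅ a, f a) - ⨅ a, g a| ≤ δ := by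
  rw [abs_sub_le_iff]
  exact ⟨ciInf_sub_le f g δ hf fun a => (abs_le.1 (h a)).2,
    ciInf_sub_le g f δ hg fun a => by have := (abs_le.1 (h a)).1; linarith⟩

/-- under the stated Lipschitz and Kantorovich conditions with `γ L_p < 1`,
value iteration starting from `Q^(1) ≡ 0` converges uniformly on `S × A` to a bounded
fixed point `Q*` of the true Bellman optimality operator, and `Q*` (as well as
`V*(s) = inf_a Q*(s,a)`) is `(L_c / (1 - γ L_p))`-Lipschitz in the state. -/
theorem stmt_5
    {d : ℕ} (hd : 1 ≤ d)
    {S : Set (Euc d)} (hSne : S.Nonempty) (hScl : IsClosed S) (hSconv : Convex ℝ S)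
    {A : Type*} [Nonempty A]
    (c : ↥S × A → ℝ) (γ : ℝ) (hγ0 : 0 ≤ γ) (hγ1 : γ < 1)
    (hcb : ∃ C, ∀ p, |c p| ≤ C)
    (P : ↥S × A → Measure ↥S) [∀ p, IsProbabilityMeasure (P p)]
    (Lc Lp : ℝ) (hLc : 0 ≤ Lc) (hLp : 0 ≤ Lp)
    (hclip : ∀ (s₁ s₂ : ↥S) (a : A),
      |c (s₁, a) - c (s₂, a)| ≤ Lc * ‖(s₁ : Euc d) - (s₂ : Euc d)‖)
    (hker : ∀ φ : ↥S → ℝ, (∃ C, ∀ s, |φ s| ≤ C) →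
      (∀ s₁ s₂ : ↥S, |φ s₁ - φ s₂| ≤ ‖(s₁ : Euc d) - (s₂ : Euc d)‖) →
      ∀ (s₁ s₂ : ↥S) (a : A),
        |(∫ s', φ s' ∂(P (s₁, a))) - ∫ s', φ s' ∂(P (s₂, a))| ≤
          Lp * ‖(s₁ : Euc d) - (s₂ : Euc d)‖)
    (hγLp : γ * Lp < 1)
    (Tstar : (↥S × A → ℝ) → (↥S × A → ℝ))
    (hTstar : ∀ (Q : ↥S × A → ℝ) (s : ↥S) (a : A),
      Tstar Q (s, a) = c (s, a) + γ * ∫ s', (⨅ a' : A, Q (s', a')) ∂(P (s, a)))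
    (Qseq : ℕ → (↥S × A → ℝ))
    (hQ1 : ∀ p, Qseq 1 p = 0)
    (hQstep : ∀ k, 1 ≤ k → Qseq (k + 1) = Tstar (Qseq k)) :
    ∃ Qstar : ↥S × A → ℝ,
      (∃ C, ∀ p, |Qstar p| ≤ C) ∧
      TendstoUniformly Qseq Qstar atTop ∧
      Tstar Qstar = Qstar ∧
      (∀ (s₁ s₂ : ↥S) (a : A),
        |Qstar (s₁, a) - Qstar (s₂, a)| ≤
          (Lc / (1 - γ * Lp)) * ‖(s₁ : Euc d) - (s₂ : Euc d)‖) ∧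
      (∀ s₁ s₂ : ↥S,
        |(⨅ a : A, Qstar (s₁, a)) - ⨅ a : A, Qstar (s₂, a)| ≤
          (Lc / (1 - γ * Lp)) * ‖(s₁ : Euc d) - (s₂ : Euc d)‖) := by
  haveI : Nonempty ↥S := hSne.to_subtype
  obtain ⟨Cc0, hCc0⟩ := hcb
  set Cc : ℝ := max Cc0 0 with hCcdef
  have hCcnn : 0 ≤ Cc := le_max_right _ _
  have hCc : ∀ p, |c p| ≤ Cc := fun p => (hCc0 p).trans (le_max_left _ _)
  have h1γ : 0 < 1 - γ := by linarith
  have h1b : 0 < 1 - γ * Lp := by linarith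
  set L : ℝ := Lc / (1 - γ * Lp) with hLdef
  have hLnn : 0 ≤ L := div_nonneg hLc h1b.le
  have hLrec : Lc + γ * Lp * L = L := by
    have h : L * (1 - γ * Lp) = Lc := by
      rw [hLdef, div_mul_cancel₀ _ h1b.ne']
    linear_combination -h
  set C : ℝ := Cc / (1 - γ) with hCdef
  have hCnn : 0 ≤ C := div_nonneg hCcnn h1γ.le
  have hCrec : Cc + γ * C = C := by
    have h : C * (1 - γ) = Cc := by
      rw [hCdef, div_mul_cancel₀ _ h1γ.ne']
    linear_combination -h
  -- Integrability of bounded Lipschitz functions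
  have integ : ∀ (V : ↥S → ℝ) (C' K : ℝ), 0 ≤ K → (∀ s, |V s| ≤ C') →
      (∀ s₁ s₂ : ↥S, |V s₁ - V s₂| ≤ K * ‖(s₁ : Euc d) - (s₂ : Euc d)‖) →
      ∀ p, Integrable V (P p) := by
    intro V C' K hK hb hl p
    have lip : LipschitzWith K.toNNReal V := by
      apply LipschitzWith.of_dist_le_mul
      intro x y
      rw [Real.dist_eq, Subtype.dist_eq, dist_eq_norm, Real.coe_toNNReal K hK]
      exact hl x y
    refine Integrable.mono' (integrable_const C') lip.continuous.measurable.aestronglyMeasurable ?_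
    exact Filter.Eventually.of_forall fun s => by rw [Real.norm_eq_abs]; exact hb s
  -- Integral bound
  have intb : ∀ (V : ↥S → ℝ) (C' : ℝ), (∀ s, |V s| ≤ C') → ∀ p, |∫ s', V s' ∂(P p)| ≤ C' := by
    intro V C' hb p
    have := norm_integral_le_of_norm_le_const (μ := P p) (f := V) (C := C')
      (Filter.Eventually.of_forall fun s => by rw [Real.norm_eq_abs]; exact hb s)
    simpa using this
  -- Kernel Lipschitz bound for K-Lipschitz bounded functions
  have kerb : ∀ (V : ↥S → ℝ) (C' K : ℝ), 0 ≤ K → (∀ s, |V s| ≤ C') →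
      (∀ s₁ s₂ : ↥S, |V s₁ - V s₂| ≤ K * ‖(s₁ : Euc d) - (s₂ : Euc d)‖) →
      ∀ (s₁ s₂ : ↥S) (a : A),
        |(∫ s', V s' ∂(P (s₁, a))) - ∫ s', V s' ∂(P (s₂, a))| ≤
          K * Lp * ‖(s₁ : Euc d) - (s₂ : Euc d)‖ := by
    intro V C' K hK hb hl s₁ s₂ a
    rcases hK.eq_or_lt with hK0 | hKpos
    · have hconst : ∀ s, V s = V s₁ := by
        intro s
        have h1 := hl s s₁
        rw [← hK0, zero_mul] at h1
        have := abs_nonneg (V s - V s₁)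
        have : |V s - V s₁| = 0 := le_antisymm h1 this
        have := abs_eq_zero.1 this
        linarith [sub_eq_zero.1 this]
      have hVe : V = fun _ => V s₁ := funext hconst
      rw [hVe]
      simp [integral_const, ← hK0]
    · set φ : ↥S → ℝ := fun s => V s / K with hφdef
      have hφb : ∃ Cφ, ∀ s, |φ s| ≤ Cφ := by
        refine ⟨C' / K, fun s => ?_⟩
        rw [hφdef, abs_div, abs_of_pos hKpos]
        gcongr
        exact hb s
      have hφl : ∀ x y : ↥S, |φ x - φ y| ≤ ‖(x : Euc d) - (y : Euc d)‖ := by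
        intro x y
        rw [hφdef]
        simp only
        rw [div_sub_div_same, abs_div, abs_of_pos hKpos, div_le_iff₀ hKpos]
        calc |V x - V y| ≤ K * ‖(x : Euc d) - (y : Euc d)‖ := hl x y
          _ = ‖(x : Euc d) - (y : Euc d)‖ * K := by ring
      have hk := hker φ hφb hφl s₁ s₂ a
      have hint : ∀ p : ↥S × A, (∫ s', φ s' ∂(P p)) = (∫ s', V s' ∂(P p)) / K := by
        intro p; rw [hφdef]; exact integral_div K V
      rw [hint, hint, div_sub_div_same, abs_div, abs_of_pos hKpos, div_le_iff₀ hKpos] at hk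
      calc |(∫ s', V s' ∂(P (s₁, a))) - ∫ s', V s' ∂(P (s₂, a))|
          ≤ Lp * ‖(s₁ : Euc d) - (s₂ : Euc d)‖ * K := hk
        _ = K * Lp * ‖(s₁ : Euc d) - (s₂ : Euc d)‖ := by ring
  -- reindexed sequence
  set R : ℕ → (↥S × A → ℝ) := fun n => Qseq (n + 1) with hRdef
  have hR0 : ∀ p, R 0 p = 0 := hQ1
  have hRstep : ∀ n, R (n + 1) = Tstar (R n) := fun n => hQstep (n + 1) (by omega)
  -- each iterate is bounded by C and L-Lipschitz in the state
  have good : ∀ n, (∀ p, |R n p| ≤ C) ∧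
      (∀ (s₁ s₂ : ↥S) (a : A),
        |R n (s₁, a) - R n (s₂, a)| ≤ L * ‖(s₁ : Euc d) - (s₂ : Euc d)‖) := by
    intro n
    induction n with
    | zero =>
      constructor
      · intro p; rw [hR0]; simpa using hCnn
      · intro s₁ s₂ a; rw [hR0, hR0]; simp; positivity
    | succ n ih =>
      obtain ⟨ihb, ihl⟩ := ih
      set V : ↥S → ℝ := fun s => ⨅ a, R n (s, a) with hVdef
      have hVb : ∀ s, |V s| ≤ C := fun s => abs_ciInf_le _ C (fun a => ihb (s, a))
      have hVl : ∀ s₁ s₂ : ↥S, |V s₁ - V s₂| ≤ L * ‖(s₁ : Euc d) - (s₂ : Euc d)‖ :=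
        fun s₁ s₂ => abs_ciInf_sub _ _ _
          (bdd_of_abs _ C fun a => ihb (s₁, a)) (bdd_of_abs _ C fun a => ihb (s₂, a))
          (fun a => ihl s₁ s₂ a)
      have hVint : ∀ q : ↥S × A,
          (∫ s', (⨅ a', R n (s', a')) ∂(P q)) = ∫ s', V s' ∂(P q) := fun q => rfl
      constructor
      · rintro ⟨s, a⟩
        rw [hRstep, hTstar, hVint (s, a)]
        calc |c (s, a) + γ * ∫ s', V s' ∂(P (s, a))|
            ≤ |c (s, a)| + γ * |∫ s', V s' ∂(P (s, a))| := by
              refine (abs_add_le _ _).trans ?_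
              rw [abs_mul, abs_of_nonneg hγ0]
          _ ≤ Cc + γ * C := add_le_add (hCc _)
              (mul_le_mul_of_nonneg_left (intb V C hVb (s, a)) hγ0)
          _ = C := hCrec
      · intro s₁ s₂ a
        rw [hRstep, hTstar, hTstar, hVint (s₁, a), hVint (s₂, a)]
        have e : (c (s₁, a) + γ * ∫ s', V s' ∂(P (s₁, a)))
            - (c (s₂, a) + γ * ∫ s', V s' ∂(P (s₂, a)))
            = (c (s₁, a) - c (s₂, a))
              + γ * ((∫ s', V s' ∂(P (s₁, a))) - ∫ s', V s' ∂(P (s₂, a))) := by ring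
        rw [e]
        calc |(c (s₁, a) - c (s₂, a))
              + γ * ((∫ s', V s' ∂(P (s₁, a))) - ∫ s', V s' ∂(P (s₂, a)))|
            ≤ |c (s₁, a) - c (s₂, a)|
              + γ * |(∫ s', V s' ∂(P (s₁, a))) - ∫ s', V s' ∂(P (s₂, a))| := by
              refine (abs_add_le _ _).trans ?_
              rw [abs_mul, abs_of_nonneg hγ0]
          _ ≤ Lc * ‖(s₁ : Euc d) - (s₂ : Euc d)‖
              + γ * (L * Lp * ‖(s₁ : Euc d) - (s₂ : Euc d)‖) :=
              add_le_add (hclip s₁ s₂ a)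
                (mul_le_mul_of_nonneg_left (kerb V C L hLnn hVb hVl s₁ s₂ a) hγ0)
          _ = L * ‖(s₁ : Euc d) - (s₂ : Euc d)‖ := by
              linear_combination ‖(s₁ : Euc d) - (s₂ : Euc d)‖ * hLrec
  -- contraction property
  have contr : ∀ (Q Q' : ↥S × A → ℝ) (δ : ℝ),
      (∀ p, |Q p| ≤ C) → (∀ p, |Q' p| ≤ C) →
      (∀ (s₁ s₂ : ↥S) (a : A), |Q (s₁, a) - Q (s₂, a)| ≤ L * ‖(s₁ : Euc d) - (s₂ : Euc d)‖) →
      (∀ (s₁ s₂ : ↥S) (a : A), |Q' (s₁, a) - Q' (s₂, a)| ≤ L * ‖(s₁ : Euc d) - (s₂ : Euc d)‖) →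
      (∀ p, |Q p - Q' p| ≤ δ) →
      ∀ p, |Tstar Q p - Tstar Q' p| ≤ γ * δ := by
    intro Q Q' δ hQb hQ'b hQl hQ'l hdd p
    obtain ⟨s, a⟩ := p
    rw [hTstar, hTstar]
    set V : ↥S → ℝ := fun s => ⨅ a, Q (s, a) with hVdef
    set V' : ↥S → ℝ := fun s => ⨅ a, Q' (s, a) with hV'def
    have hVb : ∀ s, |V s| ≤ C := fun s => abs_ciInf_le _ C (fun a => hQb (s, a))
    have hV'b : ∀ s, |V' s| ≤ C := fun s => abs_ciInf_le _ C (fun a => hQ'b (s, a))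
    have hVl : ∀ s₁ s₂ : ↥S, |V s₁ - V s₂| ≤ L * ‖(s₁ : Euc d) - (s₂ : Euc d)‖ :=
      fun s₁ s₂ => abs_ciInf_sub _ _ _
        (bdd_of_abs _ C fun a => hQb (s₁, a)) (bdd_of_abs _ C fun a => hQb (s₂, a))
        (fun a => hQl s₁ s₂ a)
    have hV'l : ∀ s₁ s₂ : ↥S, |V' s₁ - V' s₂| ≤ L * ‖(s₁ : Euc d) - (s₂ : Euc d)‖ :=
      fun s₁ s₂ => abs_ciInf_sub _ _ _
        (bdd_of_abs _ C fun a => hQ'b (s₁, a)) (bdd_of_abs _ C fun a => hQ'b (s₂, a))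
        (fun a => hQ'l s₁ s₂ a)
    have hdiff : ∀ s', |V s' - V' s'| ≤ δ := fun s' =>
      abs_ciInf_sub _ _ _
        (bdd_of_abs _ C fun a => hQb (s', a)) (bdd_of_abs _ C fun a => hQ'b (s', a))
        (fun a => hdd (s', a))
    have hVint : (∫ s', (⨅ a', Q (s', a')) ∂(P (s, a))) = ∫ s', V s' ∂(P (s, a)) := rfl
    have hV'int : (∫ s', (⨅ a', Q' (s', a')) ∂(P (s, a))) = ∫ s', V' s' ∂(P (s, a)) := rfl
    rw [hVint, hV'int]
    have e : (c (s, a) + γ * ∫ s', V s' ∂(P (s, a)))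
        - (c (s, a) + γ * ∫ s', V' s' ∂(P (s, a)))
        = γ * ((∫ s', V s' ∂(P (s, a))) - ∫ s', V' s' ∂(P (s, a))) := by ring
    rw [e, abs_mul, abs_of_nonneg hγ0]
    refine mul_le_mul_of_nonneg_left ?_ hγ0
    rw [← integral_sub (integ V C L hLnn hVb hVl (s, a)) (integ V' C L hLnn hV'b hV'l (s, a))]
    exact intb _ δ hdiff (s, a)
  -- geometric decay of successive differences
  have stepb : ∀ n, ∀ p, |R (n + 1) p - R n p| ≤ γ ^ n * Cc := by
    intro n
    induction n with
    | zero =>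
      rintro ⟨s, a⟩
      rw [hRstep 0, hTstar]
      have hz : ∀ s' : ↥S, (⨅ a', R 0 (s', a')) = (0 : ℝ) := by
        intro s'; simp [hR0]
      simp only [hz, integral_zero, mul_zero, add_zero, hR0 ((s, a) : ↥S × A)]
      simpa using hCc (s, a)
    | succ n ih =>
      have := contr (R (n + 1)) (R n) (γ ^ n * Cc)
        (good (n + 1)).1 (good n).1 (good (n + 1)).2 (good n).2 ih
      intro p
      calc |R (n + 1 + 1) p - R (n + 1) p|
          = |Tstar (R (n + 1)) p - Tstar (R n) p| := by rw [hRstep (n + 1), hRstep n]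
        _ ≤ γ * (γ ^ n * Cc) := this p
        _ = γ ^ (n + 1) * Cc := by rw [pow_succ]; ring
  -- pointwise Cauchy, define the limit
  have hgeo : ∀ p, ∀ n, dist (R n p) (R (n + 1) p) ≤ Cc * γ ^ n := by
    intro p n
    rw [Real.dist_eq, abs_sub_comm]
    calc |R (n + 1) p - R n p| ≤ γ ^ n * Cc := stepb n p
      _ = Cc * γ ^ n := by ring
  have hxlim : ∀ p, ∃ x, Tendsto (fun n => R n p) atTop (𝓝 x) :=
    fun p => cauchySeq_tendsto_of_complete (cauchySeq_of_le_geometric γ Cc hγ1 (hgeo p))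
  choose Qstar hQstar using hxlim
  have hdist : ∀ n p, dist (R n p) (Qstar p) ≤ Cc * γ ^ n / (1 - γ) :=
    fun n p => dist_le_of_le_geometric_of_tendsto γ Cc hγ1 (hgeo p) (hQstar p) n
  -- Qstar bounded
  have hQsb : ∀ p, |Qstar p| ≤ C := by
    intro p
    have h1 : Tendsto (fun n => |R n p|) atTop (𝓝 |Qstar p|) := (hQstar p).abs
    exact le_of_tendsto h1 (Eventually.of_forall fun n => (good n).1 p)
  -- Qstar Lipschitz
  have hQsl : ∀ (s₁ s₂ : ↥S) (a : A),
      |Qstar (s₁, a) - Qstar (s₂, a)| ≤ L * ‖(s₁ : Euc d) - (s₂ : Euc d)‖ := by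
    intro s₁ s₂ a
    have h1 : Tendsto (fun n => |R n (s₁, a) - R n (s₂, a)|) atTop
        (𝓝 |Qstar (s₁, a) - Qstar (s₂, a)|) := ((hQstar _).sub (hQstar _)).abs
    exact le_of_tendsto h1 (Eventually.of_forall fun n => (good n).2 s₁ s₂ a)
  -- bound sequence tends to zero
  have hb0 : Tendsto (fun n : ℕ => Cc * γ ^ n / (1 - γ)) atTop (𝓝 0) := by
    have h1 := tendsto_pow_atTop_nhds_zero_of_lt_one hγ0 hγ1
    have h2 := (h1.const_mul Cc).div_const (1 - γ)
    simpa using h2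
  -- uniform convergence
  have hunif : TendstoUniformly Qseq Qstar atTop := by
    rw [Metric.tendstoUniformly_iff]
    intro ε hε
    have hev : ∀ᶠ n : ℕ in atTop, Cc * γ ^ n / (1 - γ) < ε := hb0.eventually (gt_mem_nhds hε)
    obtain ⟨N, hN⟩ := eventually_atTop.1 hev
    filter_upwards [eventually_ge_atTop (N + 1)] with k hk p
    have hk1 : 1 ≤ k := by omega
    have hkeq : k - 1 + 1 = k := by omega
    have hQR : Qseq k p = R (k - 1) p := by rw [hRdef]; simp [hkeq]
    rw [dist_comm, hQR]
    calc dist (R (k - 1) p) (Qstar p) ≤ Cc * γ ^ (k - 1) / (1 - γ) := hdist (k - 1) p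
      _ < ε := hN (k - 1) (by omega)
  -- fixed point
  have hfix : Tstar Qstar = Qstar := by
    funext p
    have h1 : Tendsto (fun n => R (n + 1) p) atTop (𝓝 (Qstar p)) :=
      (hQstar p).comp (tendsto_add_atTop_nat 1)
    have h2 : Tendsto (fun n => R (n + 1) p) atTop (𝓝 (Tstar Qstar p)) := by
      rw [tendsto_iff_dist_tendsto_zero]
      refine squeeze_zero (g := fun n => γ * (Cc * γ ^ n / (1 - γ)))
        (fun n => dist_nonneg) (fun n => ?_) ?_
      · show dist (R (n + 1) p) (Tstar Qstar p) ≤ γ * (Cc * γ ^ n / (1 - γ))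
        rw [hRstep n, Real.dist_eq]
        exact contr (R n) Qstar (Cc * γ ^ n / (1 - γ))
          (good n).1 hQsb (good n).2 hQsl
          (fun q => by rw [← Real.dist_eq]; exact hdist n q) p
      · simpa using hb0.const_mul γ
    exact tendsto_nhds_unique h2 h1
  -- inf Lipschitz
  have hVsl : ∀ s₁ s₂ : ↥S,
      |(⨅ a : A, Qstar (s₁, a)) - ⨅ a : A, Qstar (s₂, a)| ≤
        L * ‖(s₁ : Euc d) - (s₂ : Euc d)‖ := by
    intro s₁ s₂
    exact abs_ciInf_sub _ _ _
      (bdd_of_abs _ C fun a => hQsb (s₁, a)) (bdd_of_abs _ C fun a => hQsb (s₂, a))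
      (fun a => hQsl s₁ s₂ a)
  exact ⟨Qstar, ⟨C, hQsb⟩, hunif, hfix, hQsl, hVsl⟩
end
end
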